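/- (Stability of the Gauss–Legendre coefficient matrix.) Let m_{ij} = ∫₀¹ ℓ̂'_j(s) ℓ_i(s) ds for 1 ≤ i ≤ q, 0 ≤ j ≤ q, let 𝓜 = (m_{ij})_{i,j=1,…,q}, let 0 < s₁^GL < … < s_q^GL < 1 be the nodes of the q-stage Gauss–Legendre quadrature rule on [0,1], and set M := D^{−1/2} 𝓜 D^{1/2} with D = diag(s₁^GL,…,s_q^GL). Then there exists α > 0 such that Re(x · Mx) ≥ α|x|² for all x ∈ ℂ^q, where x · y = Σᵢ conj(xᵢ)yᵢ. -/

import Mathlib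

open MeasureTheory Real

noncomputable section

/-! ## Basic differential-operator vocabulary on `ℝ^d` -/

/-- `i`-th coordinate of a point of `ℝ^d` (zero if `i ≥ d`). -/
def coord {d : ℕ} (x : EuclideanSpace ℝ (Fin d)) (i : ℕ) : ℝ :=
  if h : i < d then x ⟨i, h⟩ else 0

/-- classical `i`-th partial derivative of a complex valued function (zero if `i ≥ d`). -/
def pd {d : ℕ} (i : ℕ) (u : EuclideanSpace ℝ (Fin d) → ℂ)
    (x : EuclideanSpace ℝ (Fin d)) : ℂ :=
  if h : i < d then fderiv ℝ u x (EuclideanSpace.single ⟨i, h⟩ 1) else 0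

/-- iterated partial derivative along a list of directions. -/
def pdMulti {d : ℕ} : List ℕ → (EuclideanSpace ℝ (Fin d) → ℂ) → EuclideanSpace ℝ (Fin d) → ℂ
  | [], u => u
  | i :: l, u => pd i (pdMulti l u)

/-- time derivative (pointwise in space). -/
def tderiv {d : ℕ} (u : ℝ → EuclideanSpace ℝ (Fin d) → ℂ) (t : ℝ)
    (x : EuclideanSpace ℝ (Fin d)) : ℂ :=
  deriv (fun s => u s x) t

/-- iterated time derivative. -/
def tderivIter {d : ℕ} (k : ℕ) (u : ℝ → EuclideanSpace ℝ (Fin d) → ℂ) :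
    ℝ → EuclideanSpace ℝ (Fin d) → ℂ :=
  tderiv^[k] u

/-- angular momentum operator `L_z = -i (x ∂_y - y ∂_x)` (it vanishes when `d = 1`). -/
def Lz {d : ℕ} (u : EuclideanSpace ℝ (Fin d) → ℂ) (x : EuclideanSpace ℝ (Fin d)) : ℂ :=
  -Complex.I * ((coord x 0 : ℂ) * pd 1 u x - (coord x 1 : ℂ) * pd 0 u x)

/-- the cubic nonlinearity `z ↦ |z|² z`. -/
def cubic (z : ℂ) : ℂ := (‖z‖ : ℂ) ^ 2 * z

/-! ## Lagrange polynomials and quadrature rules -/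

/-- Lagrange basis polynomial (degree `q-1`) for the nodes `s : Fin q → ℝ`. -/
def lagStd (q : ℕ) (s : Fin q → ℝ) (i : Fin q) (x : ℝ) : ℝ :=
  ∏ j ∈ Finset.univ.erase i, (x - s j) / (s i - s j)

/-- the nodes `0, s 0, …, s (q-1)`. -/
def hatNodes (q : ℕ) (s : Fin q → ℝ) : Fin (q + 1) → ℝ := Fin.cons 0 s

/-- Lagrange basis polynomial (degree `q`) for the nodes `0, s 0, …, s (q-1)`. -/
def lagHat (q : ℕ) (s : Fin q → ℝ) (i : Fin (q + 1)) (x : ℝ) : ℝ :=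
  ∏ j ∈ Finset.univ.erase i,
    (x - hatNodes q s j) / (hatNodes q s i - hatNodes q s j)

/-- Lagrange basis polynomial for the nodes `tj 0, …, tj m`. -/
def lagNodes (m : ℕ) (tj : ℕ → ℝ) (i : ℕ) (t : ℝ) : ℝ :=
  ∏ k ∈ (Finset.range (m + 1)).erase i, (t - tj k) / (tj i - tj k)

/-- degree-`q` interpolation at the `q+1` nodes `tj 0, …, tj q` of a time dependent function. -/
def nodeInterp {d : ℕ} (q : ℕ) (tj : ℕ → ℝ) (u : ℝ → EuclideanSpace ℝ (Fin d) → ℂ)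
    (t : ℝ) (x : EuclideanSpace ℝ (Fin d)) : ℂ :=
  ∑ j ∈ Finset.range (q + 1), (lagNodes q tj j t : ℂ) * u (tj j) x

/-- `s`, `w` are the nodes/weights of the `q`-stage Gauss-Legendre quadrature rule on `[0,1]`,
i.e. the nodes lie strictly increasing in `(0,1)` and the rule is exact for polynomials of
degree `≤ 2q-1`. -/
def IsGLNodes (q : ℕ) (s w : Fin q → ℝ) : Prop :=
  (∀ i, 0 < s i ∧ s i < 1) ∧ StrictMono s ∧
    ∀ p : Polynomial ℝ, p.natDegree ≤ 2 * q - 1 →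
      (∫ x in (0:ℝ)..1, p.eval x) = ∑ i, w i * p.eval (s i)

/-- `tj`, `wj` (for `j = 0, …, q`) are the nodes/weights of the `q+1`-point Gauss-Lobatto
quadrature rule on `[a,b]`: the nodes increase strictly from `a` to `b` and the rule is exact
for polynomials of degree `≤ 2q-1`. -/
def IsLobatto (q : ℕ) (a b : ℝ) (tj wj : ℕ → ℝ) : Prop :=
  tj 0 = a ∧ tj q = b ∧ (∀ j, j < q → tj j < tj (j + 1)) ∧
    ∀ p : Polynomial ℝ, p.natDegree ≤ 2 * q - 1 →
      (∫ x in a..b, p.eval x) = ∑ j ∈ Finset.range (q + 1), wj j * p.eval (tj j)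

/-! ## The continuous setting: assumptions (A1)–(A4) -/

/-- The setting of the Gross-Pitaevskii equation with rotation, encoding the assumptions
(A1), (A3), (A4) of the paper (and carrying the repulsion parameter `β` of (A2) as data).
The Sobolev space memberships `H¹(D)`, `H¹₀(D)`, `H^s(D)` are abstract data of the setting. -/
structure GPSetting where
  /-- space dimension -/
  d : ℕ
  d_pos : 1 ≤ d
  d_le : d ≤ 3
  /-- (A1): the spatial domain, convex and bounded -/
  Dom : Set (EuclideanSpace ℝ (Fin d))
  Dom_convex : Convex ℝ Dom
  Dom_bounded : Bornology.IsBounded Dom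
  Dom_nonempty : Dom.Nonempty
  /-- (A1): the final time -/
  T : ℝ
  T_pos : 0 < T
  /-- (A2): the interaction parameter -/
  β : ℝ
  /-- (A3): the trapping potential -/
  V : EuclideanSpace ℝ (Fin d) → ℝ
  V_bdd : ∃ c, ∀ x ∈ Dom, |V x| ≤ c
  V_nonneg : ∀ x ∈ Dom, 0 ≤ V x
  /-- angular velocity -/
  Ωrot : ℝ
  /-- (A4): the constant `λ` -/
  lam : ℝ
  lam_pos : 0 < lam
  /-- (A4): the trapping potential dominates the centrifugal forces -/
  A4 : ∀ x ∈ Dom, (1 + lam) / 4 * Ωrot ^ 2 * (coord x 0 ^ 2 + coord x 1 ^ 2) ≤ V x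
  /-- membership in `H¹(D)` (abstract) -/
  memH1 : (EuclideanSpace ℝ (Fin d) → ℂ) → Prop
  /-- membership in `H¹₀(D)` (abstract) -/
  memH10 : (EuclideanSpace ℝ (Fin d) → ℂ) → Prop
  /-- membership in `H^s(D)` (abstract) -/
  memHs : ℕ → (EuclideanSpace ℝ (Fin d) → ℂ) → Prop

namespace GPSetting

/-- complex valued functions on the ambient space of the domain -/
abbrev Fn (S : GPSetting) := EuclideanSpace ℝ (Fin S.d) → ℂ

variable (S : GPSetting)

/-- the `L²(D)` inner product (conjugate linear in the first argument). -/
def innerL2 (u v : S.Fn) : ℂ := ∫ x in S.Dom, (starRingEnd ℂ) (u x) * v x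

/-- the `L²(D)` norm. -/
def L2norm (u : S.Fn) : ℝ := Real.sqrt (∫ x in S.Dom, ‖u x‖ ^ 2)

/-- the `L²(D)` norm of the gradient. -/
def gradL2 (u : S.Fn) : ℝ :=
  Real.sqrt (∫ x in S.Dom, ∑ i ∈ Finset.range S.d, ‖pd i u x‖ ^ 2)

/-- the `H¹(D)` norm. -/
def H1norm (u : S.Fn) : ℝ := Real.sqrt (S.L2norm u ^ 2 + S.gradL2 u ^ 2)

/-- the `H^s(D)` seminorm. -/
def HsSemi (s : ℕ) (u : S.Fn) : ℝ :=
  Real.sqrt (∫ x in S.Dom, ∑ α : Fin s → Fin S.d,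
    ‖pdMulti (List.ofFn fun j => (α j : ℕ)) u x‖ ^ 2)

/-- the `H^s(D)` norm. -/
def HsNorm (s : ℕ) (u : S.Fn) : ℝ :=
  Real.sqrt (∑ k ∈ Finset.range (s + 1), S.HsSemi k u ^ 2)

/-- the `L^∞(D)` norm. -/
def LinfNorm (u : S.Fn) : ℝ := (eLpNorm u ⊤ (volume.restrict S.Dom)).toReal

/-- the `W^{1,∞}(D)` norm. -/
def W1infNorm (u : S.Fn) : ℝ :=
  max (S.LinfNorm u) (⨆ i : Fin S.d, S.LinfNorm (pd (i : ℕ) u))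

/-- the vector field `b` of the paper: `b = Ω (y, -x)ᵀ` (padded by zeros). -/
def bvec (x : EuclideanSpace ℝ (Fin S.d)) (i : ℕ) : ℝ :=
  if i = 0 then S.Ωrot * coord x 1 else if i = 1 then -(S.Ωrot * coord x 0) else 0

/-- the sesquilinear form `(u,v)_H`. -/
def innerH (u v : S.Fn) : ℂ :=
  ∫ x in S.Dom,
    (∑ i ∈ Finset.range S.d,
        (starRingEnd ℂ) (pd i u x - Complex.I / 2 * (S.bvec x i : ℂ) * u x) *
          (pd i v x - Complex.I / 2 * (S.bvec x i : ℂ) * v x)) +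
      ((S.V x : ℂ) - ((∑ i ∈ Finset.range S.d, S.bvec x i ^ 2 : ℝ) : ℂ) / 4) *
        (starRingEnd ℂ) (u x) * v x

/-- the energy norm `‖v‖_H = √(v,v)_H`. -/
def HnormE (u : S.Fn) : ℝ := Real.sqrt (S.innerH u u).re

/-- the dual pairing `⟨H u, v⟩ = (∇u,∇v) - Ω (L_z u, v) + (V u, v)`. -/
def Hpair (u v : S.Fn) : ℂ :=
  ∫ x in S.Dom,
    (∑ i ∈ Finset.range S.d, (starRingEnd ℂ) (pd i u x) * pd i v x)
      - (S.Ωrot : ℂ) * (starRingEnd ℂ) (Lz u x) * v x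
      + (S.V x : ℂ) * (starRingEnd ℂ) (u x) * v x

/-- the operator `H u = -Δu - Ω L_z u + V u`. -/
def Hop (u : S.Fn) : S.Fn := fun x =>
  -(∑ i ∈ Finset.range S.d, pd i (pd i u) x) - (S.Ωrot : ℂ) * Lz u x + (S.V x : ℂ) * u x

/-- the energy functional `E`. -/
def energy (u : S.Fn) : ℝ :=
  (1 / 2) * ∫ x in S.Dom,
    ((∑ i ∈ Finset.range S.d, ‖pd i u x‖ ^ 2)
      - S.Ωrot * ((starRingEnd ℂ) (u x) * Lz u x).re
      + S.V x * ‖u x‖ ^ 2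
      + S.β / 2 * ‖u x‖ ^ 4)

/-- the truncated energy functional `Ẽ` with `Γ(s) = ∫₀ˢ γ`. -/
def truncEnergy (γ : ℝ → ℝ) (u : S.Fn) : ℝ :=
  (1 / 2) * ∫ x in S.Dom,
    ((∑ i ∈ Finset.range S.d, ‖pd i u x‖ ^ 2)
      - S.Ωrot * ((starRingEnd ℂ) (u x) * Lz u x).re
      + S.V x * ‖u x‖ ^ 2
      + S.β * ∫ t in (0:ℝ)..(‖u x‖ ^ 2), γ t)

/-- `L^∞`-in-time over `[0,T]` of a spatial (semi)norm. -/
def LinfI (Nrm : S.Fn → ℝ) (u : ℝ → S.Fn) : ℝ :=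
  ⨆ t : Set.Icc (0 : ℝ) S.T, Nrm (u t.1)

/-- the squared `L²((a,b), X)`-norm in time of a spatial (semi)norm. -/
def L2sqI (Nrm : S.Fn → ℝ) (a b : ℝ) (u : ℝ → S.Fn) : ℝ :=
  ∫ t in a..b, Nrm (u t) ^ 2

end GPSetting

/-! ## Time discretization -/

/-- a quasi-uniform partition `0 = t₀ < t₁ < ⋯ < t_N = T` with maximal step size `τ`. -/
structure TimeGrid (S : GPSetting) where
  N : ℕ
  N_pos : 0 < N
  t : ℕ → ℝ
  t_zero : t 0 = 0
  t_last : t N = S.T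
  t_mono : ∀ n, n < N → t n < t (n + 1)
  /-- the maximal step size -/
  τ : ℝ
  τ_max : ∀ n, n < N → t (n + 1) - t n ≤ τ
  τ_isMax : ∃ n, n < N ∧ t (n + 1) - t n = τ
  quasiUniform : ∃ ρ > (0:ℝ), ∀ n, n < N → ρ * τ ≤ t (n + 1) - t n

/-- `u` is, on each time interval `[t_n, t_{n+1}]`, a polynomial of degree `≤ q` in time with
coefficients in `Sp` (this encodes membership in the space `V_q` resp. `W_q`, including the
global continuity expressed by the jump conditions). -/
def PiecewisePoly (S : GPSetting) (G : TimeGrid S) (q : ℕ) (Sp : Set S.Fn)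
    (u : ℝ → S.Fn) : Prop :=
  ∀ n, n < G.N → ∃ φ : ℕ → S.Fn, (∀ j, j ≤ q → φ j ∈ Sp) ∧
    ∀ t ∈ Set.Icc (G.t n) (G.t (n + 1)), ∀ x,
      u t x = ∑ j ∈ Finset.range (q + 1), (t : ℂ) ^ j * φ j x

/-- the continuous Galerkin cG(q) time stepping scheme for the nonlinearity `g`,
with ansatz/test coefficient space `Sp` and initial value `uinit`:
`u ∈ V_q` (resp. `W_q`), `u(0) = uinit` and
`∫_{I_n} (i ∂_t u, v) - (u, v)_H - β (g(u), v) dt = 0` for all `v ∈ V_{q-1}` (resp. `W_{q-1}`). -/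
def SolvesCGgen (S : GPSetting) (G : TimeGrid S) (q : ℕ) (Sp : Set S.Fn)
    (g : ℂ → ℂ) (uinit : S.Fn) (u : ℝ → S.Fn) : Prop :=
  PiecewisePoly S G q Sp u ∧ u 0 = uinit ∧
    ∀ n, n < G.N → ∀ ψ : ℕ → S.Fn, (∀ j, j < q → ψ j ∈ Sp) →
      (∫ t in (G.t n)..(G.t (n + 1)),
        (S.innerL2 (fun x => Complex.I * tderiv u t x)
            (fun x => ∑ j ∈ Finset.range q, (t : ℂ) ^ j * ψ j x)
          - S.innerH (u t) (fun x => ∑ j ∈ Finset.range q, (t : ℂ) ^ j * ψ j x)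
          - (S.β : ℂ) * S.innerL2 (fun x => g (u t x))
              (fun x => ∑ j ∈ Finset.range q, (t : ℂ) ^ j * ψ j x))) = 0

/-! ## Space discretization: assumptions (A5)–(A7) -/

/-- a family of finite element spaces `S_h ⊂ H¹₀(D)` with Ritz projections `P_h` (w.r.t. the
scalar product `(·,·)_H`) satisfying the assumptions (A5), (A6), (A7) of the paper. -/
structure FESpaces (S : GPSetting) where
  /-- the spatial approximation order -/
  r : ℕ
  r_pos : 1 ≤ r
  /-- the finite element space for mesh size `h` -/
  Sh : ℝ → Submodule ℂ S.Fn
  Sh_findim : ∀ h, FiniteDimensional ℂ (Sh h)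
  Sh_sub : ∀ h, ∀ v ∈ Sh h, S.memH10 v
  /-- the Ritz projection w.r.t. `(·,·)_H` -/
  Ph : ℝ → S.Fn → S.Fn
  Ph_mem : ∀ h v, Ph h v ∈ Sh h
  Ph_orth : ∀ h v, ∀ w ∈ Sh h, S.innerH (v - Ph h v) w = 0
  /-- (A5): approximation property of the Ritz projection -/
  A5 : ∃ C > (0:ℝ), ∃ h0 > (0:ℝ), ∀ h, 0 < h → h ≤ h0 → ∀ k, k ≤ 1 → ∀ s, 2 ≤ s → s ≤ r + 1 →
    ∀ v, S.memHs s v → S.memH10 v →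
      S.HsNorm k (v - Ph h v) ≤ C * h ^ (s - k) * S.HsSemi s v
  /-- (A6): inverse estimate -/
  A6 : ∃ C > (0:ℝ), ∃ h0 > (0:ℝ), ∀ h, 0 < h → h ≤ h0 → ∀ v ∈ Sh h,
    S.LinfNorm v ≤ C * h ^ (-(S.d : ℝ) / 2) * S.L2norm v
  /-- the constant `C_∞` of (A7) -/
  Cinf : ℝ
  Cinf_pos : 0 < Cinf
  /-- (A7): `L^∞` bound for the Ritz projection error -/
  A7 : ∃ h0 > (0:ℝ), ∀ h, 0 < h → h ≤ h0 → ∀ v, S.memHs 2 v → S.memH10 v →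
    S.LinfNorm (v - Ph h v) ≤ Cinf * S.HsSemi 2 v

/-- the fully discrete cG(q) scheme (5) of the paper (with the cubic nonlinearity). -/
def SolvesCG (S : GPSetting) (G : TimeGrid S) (D : FESpaces S) (h : ℝ) (q : ℕ)
    (u0 : S.Fn) (u : ℝ → S.Fn) : Prop :=
  SolvesCGgen S G q (D.Sh h : Set S.Fn) cubic (D.Ph h u0) u

/-! ## Exact solution: weak solutions and regularity (A8) -/

/-- `u` is a weak solution of the Gross-Pitaevskii equation with rotation with initial value
`u0`. -/
def IsWeakSolution (S : GPSetting) (u0 : S.Fn) (u : ℝ → S.Fn) : Prop :=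
  u 0 = u0 ∧ (∀ t ∈ Set.Icc (0 : ℝ) S.T, S.memH10 (u t)) ∧
    ∀ v, S.memH10 v →
      ∀ᵐ t ∂(volume.restrict (Set.Icc (0 : ℝ) S.T)),
        S.innerL2 (fun x => Complex.I * tderiv u t x) v
          = S.Hpair (u t) v + (S.β : ℂ) * S.innerL2 (fun x => cubic (u t x)) v

/-- regularity assumption (A8):
`u ∈ W^{q+2,∞}(I, H²(D) ∩ H¹₀(D)) ∩ W^{q+1,∞}(I, W^{1,∞}(D))` and
`H u ∈ W^{q+2,∞}(I, H¹₀(D))`. -/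
def RegA8 (S : GPSetting) (q : ℕ) (u : ℝ → S.Fn) : Prop :=
  (∀ k, k ≤ q + 2 → ∀ t ∈ Set.Icc (0 : ℝ) S.T,
      S.memHs 2 (tderivIter k u t) ∧ S.memH10 (tderivIter k u t)) ∧
  (∃ C, ∀ k, k ≤ q + 2 → ∀ t ∈ Set.Icc (0 : ℝ) S.T, S.HsNorm 2 (tderivIter k u t) ≤ C) ∧
  (∃ C, ∀ k, k ≤ q + 1 → ∀ t ∈ Set.Icc (0 : ℝ) S.T, S.W1infNorm (tderivIter k u t) ≤ C) ∧
  (∀ k, k ≤ q + 2 → ∀ t ∈ Set.Icc (0 : ℝ) S.T,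
      S.memH10 (tderivIter k (fun s => S.Hop (u s)) t)) ∧
  (∃ C, ∀ k, k ≤ q + 2 → ∀ t ∈ Set.Icc (0 : ℝ) S.T,
      S.H1norm (tderivIter k (fun s => S.Hop (u s)) t) ≤ C)

/-- the additional regularity `u, ∂_t u ∈ L^∞(I, H^{r+1}(D))`. -/
def RegHr (S : GPSetting) (r : ℕ) (u : ℝ → S.Fn) : Prop :=
  (∀ t ∈ Set.Icc (0 : ℝ) S.T, S.memHs (r + 1) (u t) ∧ S.memHs (r + 1) (tderiv u t)) ∧
  ∃ C, ∀ t ∈ Set.Icc (0 : ℝ) S.T,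
    S.HsNorm (r + 1) (u t) ≤ C ∧ S.HsNorm (r + 1) (tderiv u t) ≤ C

/-- the constant `M = ‖u‖_{L^∞(I×D)} + C_∞ ‖u‖_{L^∞(I,H²(D))} + 1`. -/
def Mconst (S : GPSetting) (Cinf : ℝ) (u : ℝ → S.Fn) : ℝ :=
  S.LinfI S.LinfNorm u + Cinf * S.LinfI (S.HsNorm 2) u + 1

/-- the constant `C_I(u) = C (‖∂_t^{q+1} u‖_{L^∞(I,H¹)} + ‖∂_t^{q+2} u‖_{L^∞(I,H¹)}
 + ‖∂_t^{q+1} H u‖_{L^∞(I,H¹)})`. -/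
def CIconst (S : GPSetting) (q : ℕ) (C : ℝ) (u : ℝ → S.Fn) : ℝ :=
  C * (S.LinfI S.H1norm (tderivIter (q + 1) u)
      + S.LinfI S.H1norm (tderivIter (q + 2) u)
      + S.LinfI S.H1norm (tderivIter (q + 1) (fun s => S.Hop (u s))))

/-- the local quantity `‖∂_t^{q+1} ∇u‖²_{L²(I_n×D)} + ‖∂_t^{q+2} ∇u‖²_{L²(I_n×D)}
 + ‖∂_t^{q+1} ∇H u‖²_{L²(I_n×D)}` appearing in `C_n(u)`. -/
def Cnloc (S : GPSetting) (q : ℕ) (a b : ℝ) (u : ℝ → S.Fn) : ℝ :=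
  S.L2sqI S.gradL2 a b (tderivIter (q + 1) u)
    + S.L2sqI S.gradL2 a b (tderivIter (q + 2) u)
    + S.L2sqI S.gradL2 a b (tderivIter (q + 1) (fun s => S.Hop (u s)))

/-- `f` is a cutoff nonlinearity with parameter `M` and Lipschitz constant `K`
(relative to the exact solution `u`), as produced by Lemma 4.1 (cutoff) of the paper. -/
def IsCutoff (S : GPSetting) (M K : ℝ) (u : ℝ → S.Fn) (f : ℂ → ℂ) : Prop :=
  (∃ γ : ℝ → ℝ, ContDiff ℝ 2 γ ∧ γ 0 = 0 ∧ (∀ s, 0 ≤ s → 0 ≤ γ s) ∧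
      ∀ z, f z = (γ (‖z‖ ^ 2) : ℂ) * z) ∧
  (∀ z, ‖z‖ < M → f z = cubic z) ∧
  (∀ z, ‖f z‖ ≤ K * ‖z‖) ∧
  (∀ z w, ‖f z - f w‖ ≤ K * ‖z - w‖) ∧
  (∀ v w : S.Fn, S.W1infNorm v < S.LinfI S.W1infNorm u + 1 → S.memH1 w →
    S.gradL2 (fun x => f (v x) - f (w x)) ≤ K * S.gradL2 (fun x => v x - w x))

/-! ## Helper notions for the quadrature error terms -/

/-- the Gauss-Legendre nodes transported to the interval `[a,b]`. -/
def glNodes (q : ℕ) (s : Fin q → ℝ) (a b : ℝ) : Fin q → ℝ := fun k => a + s k * (b - a)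

/-- the quadrature error term
`A = Σ_j w^Lo_j ℓ'(t^Lo_j) u(t^Lo_j) - ∫_a^b ℓ' u dt` (pointwise in space). -/
def Aquad {d : ℕ} (q : ℕ) (ℓ : ℝ → ℝ) (a b : ℝ) (tLo wLo : ℕ → ℝ)
    (u : ℝ → EuclideanSpace ℝ (Fin d) → ℂ) : EuclideanSpace ℝ (Fin d) → ℂ := fun x =>
  (∑ j ∈ Finset.range (q + 1), ((wLo j * deriv ℓ (tLo j) : ℝ) : ℂ) * u (tLo j) x)
    - ∫ t in a..b, ((deriv ℓ t : ℝ) : ℂ) * u t x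

/-- the quadrature error term
`B = Σ_j w^Lo_j ℓ(t^Lo_j) v(t^Lo_j) - ∫_a^b ℓ v dt` (pointwise in space). -/
def Bquad {d : ℕ} (q : ℕ) (ℓ : ℝ → ℝ) (a b : ℝ) (tLo wLo : ℕ → ℝ)
    (v : ℝ → EuclideanSpace ℝ (Fin d) → ℂ) : EuclideanSpace ℝ (Fin d) → ℂ := fun x =>
  (∑ j ∈ Finset.range (q + 1), ((wLo j * ℓ (tLo j) : ℝ) : ℂ) * v (tLo j) x)
    - ∫ t in a..b, ((ℓ t : ℝ) : ℂ) * v t x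

/-- the quadrature error term
`C = ℓ(b) η(b) - Σ_j w^Lo_j ℓ'(t^Lo_j) η(t^Lo_j) - ℓ(a) η(a)` (pointwise in space). -/
def Cquad {d : ℕ} (q : ℕ) (ℓ : ℝ → ℝ) (a b : ℝ) (tLo wLo : ℕ → ℝ)
    (η : ℝ → EuclideanSpace ℝ (Fin d) → ℂ) : EuclideanSpace ℝ (Fin d) → ℂ := fun x =>
  (ℓ b : ℂ) * η b x
    - (∑ j ∈ Finset.range (q + 1), ((wLo j * deriv ℓ (tLo j) : ℝ) : ℂ) * η (tLo j) x)
    - (ℓ a : ℂ) * η a x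

namespace Stmt6Aux

open Polynomial MeasureTheory

/-- polynomial form of a Lagrange basis polynomial -/
def lagP {n : ℕ} (t : Fin n → ℝ) (i : Fin n) : ℝ[X] :=
  ∏ j ∈ Finset.univ.erase i, (C ((t i - t j)⁻¹) * (X - C (t j)))

lemma lagP_eval {n : ℕ} (t : Fin n → ℝ) (i : Fin n) (x : ℝ) :
    (lagP t i).eval x = ∏ j ∈ Finset.univ.erase i, (x - t j) / (t i - t j) := by
  rw [lagP, eval_prod]
  refine Finset.prod_congr rfl fun j _ => ?_
  simp [div_eq_inv_mul]

lemma lagP_natDegree {n : ℕ} (t : Fin n → ℝ) (i : Fin n) :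
    (lagP t i).natDegree ≤ n - 1 := by
  refine le_trans (natDegree_prod_le _ _) ?_
  have h1 : ∀ j ∈ Finset.univ.erase i,
      (C ((t i - t j)⁻¹) * (X - C (t j))).natDegree ≤ 1 := fun j _ =>
    le_trans natDegree_mul_le (by simp [natDegree_X_sub_C])
  have := Finset.sum_le_card_nsmul _ _ 1 h1
  simpa [Finset.card_erase_of_mem] using this

lemma lagP_eval_node {n : ℕ} (t : Fin n → ℝ) (ht : Function.Injective t) (i k : Fin n) :
    (lagP t i).eval (t k) = if k = i then 1 else 0 := by
  rw [lagP, eval_prod]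
  by_cases h : k = i
  · subst h
    rw [if_pos rfl]
    refine Finset.prod_eq_one fun j hj => ?_
    have hne : t k - t j ≠ 0 :=
      sub_ne_zero.2 fun he => (Finset.mem_erase.1 hj).1 (ht he).symm
    simp [inv_mul_cancel₀ hne]
  · rw [if_neg h]
    refine Finset.prod_eq_zero (Finset.mem_erase.2 ⟨h, Finset.mem_univ k⟩) ?_
    simp

lemma hatNodes_inj {q : ℕ} {s : Fin q → ℝ} (hs : ∀ i, 0 < s i)
    (hinj : Function.Injective s) : Function.Injective (hatNodes q s) := by
  intro a b hab
  rcases Fin.eq_zero_or_eq_succ a with rfl | ⟨i, rfl⟩ <;>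
    rcases Fin.eq_zero_or_eq_succ b with rfl | ⟨j, rfl⟩
  · rfl
  · rw [hatNodes, Fin.cons_zero, Fin.cons_succ] at hab
    exact absurd hab.symm (hs j).ne'
  · rw [hatNodes, Fin.cons_succ, Fin.cons_zero] at hab
    exact absurd hab (hs i).ne'
  · rw [hatNodes, Fin.cons_succ, Fin.cons_succ] at hab
    exact congrArg Fin.succ (hinj hab)

lemma integral_eval_add (A B : ℝ[X]) :
    (∫ x in (0:ℝ)..1, (A + B).eval x)
      = (∫ x in (0:ℝ)..1, A.eval x) + ∫ x in (0:ℝ)..1, B.eval x := by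
  simp only [eval_add]
  exact intervalIntegral.integral_add (A.continuous.intervalIntegrable _ _)
    (B.continuous.intervalIntegrable _ _)

lemma integral_eval_derivative (R : ℝ[X]) :
    (∫ x in (0:ℝ)..1, (derivative R).eval x) = R.eval 1 - R.eval 0 :=
  intervalIntegral.integral_eq_sub_of_hasDerivAt (fun x _ => R.hasDerivAt x)
    ((derivative R).continuous.intervalIntegrable _ _)

lemma integral_eval_sq_pos (P : ℝ[X]) (hP : P ≠ 0) :
    0 < ∫ x in (0:ℝ)..1, (P ^ 2).eval x := by
  rw [intervalIntegral.integral_of_le zero_le_one]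
  have hnn : 0 ≤ᵐ[volume.restrict (Set.Ioc (0:ℝ) 1)] fun x => (P ^ 2).eval x :=
    Filter.Eventually.of_forall fun x => by simp only [eval_pow]; positivity
  have hint : IntegrableOn (fun x => (P ^ 2).eval x) (Set.Ioc (0:ℝ) 1) volume :=
    (P ^ 2).continuous.integrableOn_Ioc
  rw [MeasureTheory.setIntegral_pos_iff_support_of_nonneg_ae hnn hint]
  have hsub : Set.Ioc (0:ℝ) 1 \ (P.roots.toFinset : Set ℝ)
      ⊆ Function.support (fun x => (P ^ 2).eval x) ∩ Set.Ioc 0 1 := by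
    rintro x ⟨hx, hxr⟩
    refine ⟨?_, hx⟩
    simp only [Function.mem_support, eval_pow]
    intro hzero
    have hx0 : P.eval x = 0 := by
      have := pow_eq_zero_iff (n := 2) two_ne_zero |>.1 hzero
      exact this
    exact hxr (by
      simp only [Finset.coe_sort_coe, Finset.mem_coe, Multiset.mem_toFinset]
      exact (Polynomial.mem_roots hP).2 hx0)
  refine lt_of_lt_of_le ?_ (measure_mono hsub)
  rw [MeasureTheory.measure_diff_null
    ((P.roots.toFinset : Set ℝ).toFinite.measure_zero volume)]
  simp [Real.volume_Ioc]

lemma w_pos (q : ℕ) (s w : Fin q → ℝ) (hinj : Function.Injective s)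
    (hex : ∀ p : Polynomial ℝ, p.natDegree ≤ 2 * q - 1 →
      (∫ x in (0:ℝ)..1, p.eval x) = ∑ i, w i * p.eval (s i)) (i : Fin q) :
    0 < w i := by
  have hdeg : ((lagP s i) ^ 2).natDegree ≤ 2 * q - 1 := by
    have h1 := lagP_natDegree s i
    rw [natDegree_pow]
    omega
  have hP0 : lagP s i ≠ 0 := by
    intro h0
    have := lagP_eval_node s hinj i i
    rw [h0] at this
    simp at this
  have hpos := integral_eval_sq_pos _ hP0
  rw [hex _ hdeg] at hpos
  have hsum : ∑ k, w k * ((lagP s i) ^ 2).eval (s k) = w i := by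
    rw [Finset.sum_eq_single i]
    · simp [eval_pow, lagP_eval_node s hinj i i]
    · intro k _ hk
      simp [eval_pow, lagP_eval_node s hinj i k, hk]
    · simp
  rwa [hsum] at hpos

lemma key (q : ℕ) (hq : 1 ≤ q) (s w : Fin q → ℝ) (hs : ∀ i, 0 < s i)
    (hex : ∀ p : Polynomial ℝ, p.natDegree ≤ 2 * q - 1 →
      (∫ x in (0:ℝ)..1, p.eval x) = ∑ i, w i * p.eval (s i))
    (P : Polynomial ℝ) (hdeg : P.natDegree ≤ q) (h0 : P.eval 0 = 0) :
    (1/2) * ∑ i, w i * (P.eval (s i) / s i) ^ 2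
      ≤ ∑ i, (w i / s i) * (P.eval (s i) * (derivative P).eval (s i)) := by
  set g := P.divX with hgdef
  have hPg : g * X = P := by
    have h := P.divX_mul_X_add
    rwa [P.coeff_zero_eq_eval_zero, h0, map_zero, add_zero] at h
  have hgdeg : g.natDegree ≤ q - 1 := by
    by_cases hg0 : g = 0
    · simp [hg0]
    · have h1 := Polynomial.natDegree_mul_X hg0
      rw [hPg] at h1
      omega
  set Q := g * (derivative g * X + g) with hQ
  have hQdeg : Q.natDegree ≤ 2 * q - 1 := by
    have h1 : (derivative g * X).natDegree ≤ (g.natDegree - 1) + 1 :=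
      le_trans natDegree_mul_le
        (by simpa [natDegree_X] using add_le_add_right (natDegree_derivative_le g) 1)
    have h2 := natDegree_add_le (derivative g * X) g
    have h3 := natDegree_mul_le (p := g) (q := derivative g * X + g)
    rw [hQ]
    have h4 : (derivative g * X + g).natDegree ≤ max ((g.natDegree - 1) + 1) g.natDegree := by
      refine le_trans h2 ?_
      exact max_le (le_trans h1 (le_max_left _ _)) (le_max_right _ _)
    have h5 : max ((g.natDegree - 1) + 1) g.natDegree ≤ q - 1 + 1 := by
      refine max_le (by omega) (by omega)
    refine le_trans h3 ?_
    omega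
  have hggdeg : (g * g).natDegree ≤ 2 * q - 1 := le_trans natDegree_mul_le (by omega)
  have e1 := hex Q hQdeg
  have e2 := hex (g * g) hggdeg
  have hid : Q + Q = g * g + derivative (X * (g * g)) := by
    rw [hQ, derivative_mul, derivative_X, derivative_mul]
    ring
  have hI : (∫ x in (0:ℝ)..1, Q.eval x) + (∫ x in (0:ℝ)..1, Q.eval x)
      = (∫ x in (0:ℝ)..1, (g * g).eval x)
        + ((X * (g * g)).eval 1 - (X * (g * g)).eval 0) := by
    calc (∫ x in (0:ℝ)..1, Q.eval x) + (∫ x in (0:ℝ)..1, Q.eval x)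
        = ∫ x in (0:ℝ)..1, (Q + Q).eval x := (integral_eval_add Q Q).symm
      _ = ∫ x in (0:ℝ)..1, (g * g + derivative (X * (g * g))).eval x := by rw [hid]
      _ = (∫ x in (0:ℝ)..1, (g * g).eval x)
            + ∫ x in (0:ℝ)..1, (derivative (X * (g * g))).eval x := integral_eval_add _ _
      _ = _ := by rw [integral_eval_derivative]
  have hep : (X * (g * g)).eval 0 = 0 := by simp
  have hepos : 0 ≤ (X * (g * g)).eval 1 := by
    simp only [eval_mul, eval_X, one_mul]
    exact mul_self_nonneg _
  have hge : (1/2) * (∫ x in (0:ℝ)..1, (g * g).eval x) ≤ ∫ x in (0:ℝ)..1, Q.eval x := by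
    rw [hep] at hI
    linarith
  have hL : ∑ i, w i * (P.eval (s i) / s i) ^ 2 = ∫ x in (0:ℝ)..1, (g * g).eval x := by
    rw [e2]
    refine Finset.sum_congr rfl fun i _ => ?_
    have h1 : P.eval (s i) = g.eval (s i) * s i := by rw [← hPg]; simp
    rw [h1, eval_mul, mul_div_cancel_right₀ _ (hs i).ne']
    ring
  have hR : ∑ i, (w i / s i) * (P.eval (s i) * (derivative P).eval (s i))
      = ∫ x in (0:ℝ)..1, Q.eval x := by
    rw [e1]
    refine Finset.sum_congr rfl fun i _ => ?_
    have h1 : P.eval (s i) = g.eval (s i) * s i := by rw [← hPg]; simp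
    have h2 : (derivative P).eval (s i)
        = (derivative g).eval (s i) * s i + g.eval (s i) := by
      rw [← hPg, derivative_mul, derivative_X]
      simp
    rw [h1, h2, hQ]
    simp only [eval_mul, eval_add, eval_X]
    field_simp [(hs i).ne']
  rw [hL, hR]
  exact hge

lemma interp_natDegree (q : ℕ) (s : Fin q → ℝ) (c : Fin q → ℝ) :
    (∑ j, c j • lagP (hatNodes q s) j.succ).natDegree ≤ q :=
  natDegree_sum_le_of_forall_le _ _ fun j _ =>
    le_trans (natDegree_smul_le _ _)
      (by simpa using lagP_natDegree (hatNodes q s) j.succ)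

lemma interp_eval_zero (q : ℕ) (s : Fin q → ℝ)
    (hinj : Function.Injective (hatNodes q s)) (c : Fin q → ℝ) :
    (∑ j, c j • lagP (hatNodes q s) j.succ).eval 0 = 0 := by
  rw [eval_finset_sum]
  refine Finset.sum_eq_zero fun j _ => ?_
  have h0 : (c j • lagP (hatNodes q s) j.succ).eval (hatNodes q s 0) = 0 := by
    rw [eval_smul, lagP_eval_node _ hinj, if_neg (Ne.symm (Fin.succ_ne_zero j)), smul_zero]
  simpa [hatNodes] using h0

lemma interp_eval (q : ℕ) (s : Fin q → ℝ)
    (hinj : Function.Injective (hatNodes q s)) (c : Fin q → ℝ) (k : Fin q) :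
    (∑ j, c j • lagP (hatNodes q s) j.succ).eval (s k) = c k := by
  rw [eval_finset_sum]
  have hsk : s k = hatNodes q s k.succ := by simp [hatNodes]
  rw [Finset.sum_eq_single k]
  · rw [eval_smul, hsk, lagP_eval_node _ hinj, if_pos rfl, smul_eq_mul, mul_one]
  · intro j _ hj
    rw [eval_smul, hsk, lagP_eval_node _ hinj,
      if_neg (fun h => hj (Fin.succ_inj.1 h).symm), smul_zero]
  · simp

lemma interp_deriv_eval (q : ℕ) (s : Fin q → ℝ) (c : Fin q → ℝ) (y : ℝ) :
    (derivative (∑ j, c j • lagP (hatNodes q s) j.succ)).eval y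
      = ∑ j, c j * (derivative (lagP (hatNodes q s) j.succ)).eval y := by
  rw [derivative_sum, eval_finset_sum]
  exact Finset.sum_congr rfl fun j _ => by rw [derivative_smul, eval_smul, smul_eq_mul]

end Stmt6Aux

open Polynomial

/-- **Lemma 4.3: stability of the Gauss-Legendre coefficient matrix.** For the
matrix `M = D^{-1/2} 𝓜 D^{1/2}` with `𝓜_{ij} = ∫₀¹ ℓ̂'_j ℓ_i` (for `i, j = 1, …, q`) and
`D = diag(s₁^GL, …, s_q^GL)`, there is `α > 0` with `Re(x ⬝ M x) ≥ α |x|²` for all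
`x ∈ ℂ^q`. -/
theorem stmt6 (q : ℕ) (hq : 1 ≤ q) (s w : Fin q → ℝ) (hGL : IsGLNodes q s w) :
    ∃ α > (0:ℝ), ∀ x : Fin q → ℂ,
      α * ∑ i, ‖x i‖ ^ 2 ≤
        (∑ i, ∑ j, (starRingEnd ℂ) (x i) *
            ((s i ^ (-(1:ℝ) / 2) *
              (∫ y in (0:ℝ)..1, deriv (lagHat q s j.succ) y * lagStd q s i y) *
              s j ^ ((1:ℝ) / 2) : ℝ) : ℂ) * x j).re := by
  classical
  obtain ⟨hrange, hmono, hex⟩ := hGL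
  have hs : ∀ i, 0 < s i := fun i => (hrange i).1
  have hs1 : ∀ i, s i ≤ 1 := fun i => (hrange i).2.le
  have hinj : Function.Injective s := hmono.injective
  have hhat : Function.Injective (hatNodes q s) := Stmt6Aux.hatNodes_inj hs hinj
  have hne : (Finset.univ : Finset (Fin q)).Nonempty := ⟨⟨0, by omega⟩, Finset.mem_univ _⟩
  have hw : ∀ i, 0 < w i := fun i => Stmt6Aux.w_pos q s w hinj hex i
  refine ⟨(Finset.univ.inf' hne w) / 2, by
    have := (Finset.lt_inf'_iff hne (f := w) (a := 0)).2 fun i _ => hw i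
    linarith, fun x => ?_⟩
  set β := Finset.univ.inf' hne w with hβ
  have hβle : ∀ i, β ≤ w i := fun i => Finset.inf'_le w (Finset.mem_univ i)
  -- Step 1: the matrix entries via Gauss-Legendre exactness
  have hm : ∀ i j : Fin q,
      (∫ y in (0:ℝ)..1, deriv (lagHat q s j.succ) y * lagStd q s i y)
        = w i * (derivative (Stmt6Aux.lagP (hatNodes q s) j.succ)).eval (s i) := by
    intro i j
    have hfun : (fun y => deriv (lagHat q s j.succ) y * lagStd q s i y)
        = fun y => (derivative (Stmt6Aux.lagP (hatNodes q s) j.succ)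
            * Stmt6Aux.lagP s i).eval y := by
      funext y
      have h1 : lagHat q s j.succ
          = fun z => (Stmt6Aux.lagP (hatNodes q s) j.succ).eval z := by
        funext z
        rw [Stmt6Aux.lagP_eval]
        rfl
      rw [h1, Polynomial.deriv, eval_mul, Stmt6Aux.lagP_eval]
      rfl
    rw [hfun]
    have hdeg : (derivative (Stmt6Aux.lagP (hatNodes q s) j.succ)
        * Stmt6Aux.lagP s i).natDegree ≤ 2 * q - 1 := by
      have h1 := Polynomial.natDegree_derivative_le (Stmt6Aux.lagP (hatNodes q s) j.succ)
      have h2 := Stmt6Aux.lagP_natDegree (hatNodes q s) j.succ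
      have h3 := Stmt6Aux.lagP_natDegree s i
      refine le_trans Polynomial.natDegree_mul_le ?_
      simp only [Nat.add_sub_cancel] at h2
      omega
    rw [hex _ hdeg, Finset.sum_eq_single i]
    · rw [eval_mul, Stmt6Aux.lagP_eval_node s hinj i i, if_pos rfl, mul_one]
    · intro k _ hk
      rw [eval_mul, Stmt6Aux.lagP_eval_node s hinj i k, if_neg hk, mul_zero, mul_zero]
    · simp
  -- the real coefficient vectors
  set a : Fin q → ℝ := fun i => Real.sqrt (s i) * (x i).re with hadef
  set b : Fin q → ℝ := fun i => Real.sqrt (s i) * (x i).im with hbdef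
  set p : Polynomial ℝ := ∑ j, a j • Stmt6Aux.lagP (hatNodes q s) j.succ with hpdef
  set r : Polynomial ℝ := ∑ j, b j • Stmt6Aux.lagP (hatNodes q s) j.succ with hrdef
  -- Step 2: real form of the sesquilinear form
  have hre : (∑ i, ∑ j, (starRingEnd ℂ) (x i) *
        ((s i ^ (-(1:ℝ) / 2) *
          (∫ y in (0:ℝ)..1, deriv (lagHat q s j.succ) y * lagStd q s i y) *
          s j ^ ((1:ℝ) / 2) : ℝ) : ℂ) * x j).re
      = ∑ i, ∑ j, (w i / s i)
          * (derivative (Stmt6Aux.lagP (hatNodes q s) j.succ)).eval (s i)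
          * (a i * a j + b i * b j) := by
    rw [Complex.re_sum]
    refine Finset.sum_congr rfl fun i _ => ?_
    rw [Complex.re_sum]
    refine Finset.sum_congr rfl fun j _ => ?_
    rw [hm i j]
    have hre1 : ∀ (c : ℝ) (z y : ℂ),
        ((starRingEnd ℂ) z * (c:ℂ) * y).re = c * (z.re * y.re + z.im * y.im) := by
      intro c z y
      simp [Complex.mul_re, Complex.mul_im]
      ring
    rw [hre1]
    simp only [hadef, hbdef]
    have h2 : s j ^ ((1:ℝ)/2) = Real.sqrt (s j) := (Real.sqrt_eq_rpow _).symm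
    have h3 : s i ^ (-(1:ℝ)/2) = (Real.sqrt (s i))⁻¹ := by
      rw [neg_div, Real.rpow_neg (hs i).le, ← Real.sqrt_eq_rpow]
    rw [h2, h3]
    obtain ⟨u, hu, hu2⟩ : ∃ u : ℝ, Real.sqrt (s i) = u ∧ u * u = s i :=
      ⟨_, rfl, Real.mul_self_sqrt (hs i).le⟩
    have hu0 : u ≠ 0 := by
      rw [← hu]
      exact ne_of_gt (Real.sqrt_pos.2 (hs i))
    rw [hu, ← hu2]
    field_simp
  -- Step 3: collapse the double sum using the interpolation polynomials p and r
  have hsum2 : ∑ i, ∑ j, (w i / s i)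
        * (derivative (Stmt6Aux.lagP (hatNodes q s) j.succ)).eval (s i)
        * (a i * a j + b i * b j)
      = (∑ i, (w i / s i) * (p.eval (s i) * (derivative p).eval (s i)))
        + ∑ i, (w i / s i) * (r.eval (s i) * (derivative r).eval (s i)) := by
    rw [← Finset.sum_add_distrib]
    refine Finset.sum_congr rfl fun i _ => ?_
    have hpe : p.eval (s i) = a i := by rw [hpdef]; exact Stmt6Aux.interp_eval q s hhat a i
    have hre2 : r.eval (s i) = b i := by rw [hrdef]; exact Stmt6Aux.interp_eval q s hhat b i
    have hpd : (derivative p).eval (s i)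
        = ∑ j, a j * (derivative (Stmt6Aux.lagP (hatNodes q s) j.succ)).eval (s i) := by
      rw [hpdef]; exact Stmt6Aux.interp_deriv_eval q s a (s i)
    have hrd : (derivative r).eval (s i)
        = ∑ j, b j * (derivative (Stmt6Aux.lagP (hatNodes q s) j.succ)).eval (s i) := by
      rw [hrdef]; exact Stmt6Aux.interp_deriv_eval q s b (s i)
    rw [hpe, hre2, hpd, hrd]
    simp only [Finset.mul_sum]
    rw [← Finset.sum_add_distrib]
    exact Finset.sum_congr rfl fun j _ => by ring
  -- Step 4: the coercivity of the two real quadratic forms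
  have hkeyp := Stmt6Aux.key q hq s w hs hex p
    (hpdef ▸ Stmt6Aux.interp_natDegree q s a) (hpdef ▸ Stmt6Aux.interp_eval_zero q s hhat a)
  have hkeyr := Stmt6Aux.key q hq s w hs hex r
    (hrdef ▸ Stmt6Aux.interp_natDegree q s b) (hrdef ▸ Stmt6Aux.interp_eval_zero q s hhat b)
  have hLp : ∑ i, w i * (p.eval (s i) / s i) ^ 2 = ∑ i, w i * (a i / s i) ^ 2 :=
    Finset.sum_congr rfl fun i _ => by
      rw [hpdef, Stmt6Aux.interp_eval q s hhat a i]
  have hLr : ∑ i, w i * (r.eval (s i) / s i) ^ 2 = ∑ i, w i * (b i / s i) ^ 2 :=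
    Finset.sum_congr rfl fun i _ => by
      rw [hrdef, Stmt6Aux.interp_eval q s hhat b i]
  rw [hLp] at hkeyp
  rw [hLr] at hkeyr
  -- Step 5: the per-index lower bound
  have hterm : ∀ i : Fin q, (β/2) * ‖x i‖ ^ 2
      ≤ (1/2) * (w i * (a i / s i) ^ 2) + (1/2) * (w i * (b i / s i) ^ 2) := by
    intro i
    have habs : ‖x i‖ ^ 2 = (x i).re ^ 2 + (x i).im ^ 2 := by
      rw [Complex.sq_norm, Complex.normSq_apply]
      ring
    have ha2 : (a i / s i) ^ 2 = (x i).re ^ 2 / s i := by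
      simp only [hadef]
      rw [div_pow, mul_pow, Real.sq_sqrt (hs i).le, pow_two (s i),
        mul_div_mul_left _ _ (hs i).ne']
    have hb2 : (b i / s i) ^ 2 = (x i).im ^ 2 / s i := by
      simp only [hbdef]
      rw [div_pow, mul_pow, Real.sq_sqrt (hs i).le, pow_two (s i),
        mul_div_mul_left _ _ (hs i).ne']
    have hle : (x i).re ^ 2 + (x i).im ^ 2 ≤ ((x i).re ^ 2 + (x i).im ^ 2) / s i := by
      rw [le_div_iff₀ (hs i)]
      nlinarith [sq_nonneg (x i).re, sq_nonneg (x i).im, hs1 i, hs i]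
    rw [habs, ha2, hb2]
    calc (β/2) * ((x i).re ^ 2 + (x i).im ^ 2)
        ≤ (w i/2) * ((x i).re ^ 2 + (x i).im ^ 2) := by
          apply mul_le_mul_of_nonneg_right _ (by positivity)
          linarith [hβle i]
      _ ≤ (w i/2) * (((x i).re ^ 2 + (x i).im ^ 2) / s i) := by
          apply mul_le_mul_of_nonneg_left hle
          linarith [hw i]
      _ = (1/2) * (w i * ((x i).re ^ 2 / s i)) + (1/2) * (w i * ((x i).im ^ 2 / s i)) := by
          ring
  -- assemble
  calc β / 2 * ∑ i, ‖x i‖ ^ 2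
      = ∑ i, (β/2) * ‖x i‖ ^ 2 := Finset.mul_sum _ _ _
    _ ≤ ∑ i, ((1/2) * (w i * (a i / s i) ^ 2) + (1/2) * (w i * (b i / s i) ^ 2)) :=
        Finset.sum_le_sum fun i _ => hterm i
    _ = (1/2) * (∑ i, w i * (a i / s i) ^ 2) + (1/2) * (∑ i, w i * (b i / s i) ^ 2) := by
        rw [Finset.sum_add_distrib, Finset.mul_sum, Finset.mul_sum]
    _ ≤ (∑ i, (w i / s i) * (p.eval (s i) * (derivative p).eval (s i)))
        + ∑ i, (w i / s i) * (r.eval (s i) * (derivative r).eval (s i)) :=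
        add_le_add hkeyp hkeyr
    _ = _ := by rw [hre, hsum2]
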